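/- Under the equal-MSE constraint b₂² + s₂² = s₁² with 0 < s₂ < s₁ and critical value z ≥ z₀ where 2Φ(z₀) − 1 = 0.95 (i.e., z ≥ Φ⁻¹(0.975) ≈ 1.96), the coverage probability Φ((z s₁ − b₂)/s₂) − Φ((−z s₁ − b₂)/s₂) of the interval θ̂₂ ± z s₁ is strictly greater than 2Φ(z) − 1 whenever b₂ ≠ 0. -/

import Mathlib

open MeasureTheory ProbabilityTheory Real Filter Set

/-- Standard normal CDF. -/
noncomputable def Phi (x : ℝ) : ℝ := ((gaussianReal 0 1) (Set.Iic x)).toReal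

/-!
With `t = b₂ / s₂`, the equal-MSE constraint reads `s₁ / s₂ = √(1 + t²)`, so the coverage is
`C(t) = Φ(z √(1 + t²) - t) - Φ(-z √(1 + t²) - t)`, an even function with `C(0) = 2 Φ(z) - 1`.
With `r = √(1 + t²)` one finds `C'(t) = φ(z r + t) / r * ((r + z t) - (r - z t) e^{2 z r t})`,
which is positive for `t > 0` once `z ≥ √3`: putting `x = z t / r`, this says
`e^{2x / (1 - x²/z²)} (1 - x) < 1 + x`, and comparing the geometric series `2x ∑ (x²/z²)ᵏ`
termwise with `log ((1 + x) / (1 - x)) = 2 ∑ x^(2k+1) / (2k+1)` only needs `2k + 1 ≤ 3ᵏ`.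
Finally `z ≥ z₀ > √3`, because the Mills-ratio bound `φ(a)/a - φ(b)/b ≤ (1 + a⁻²) (Φ(b) - Φ(a))`
gives `Φ(√3) < 0.975`.
-/

noncomputable def phi (x : ℝ) : ℝ := (√(2 * π))⁻¹ * exp (-x ^ 2 / 2)

lemma gaussianPDFReal_zero_one : gaussianPDFReal 0 1 = phi := by
  ext x; simp [gaussianPDFReal, phi]

lemma phi_pos (x : ℝ) : 0 < phi x :=
  gaussianPDFReal_zero_one ▸ gaussianPDFReal_pos 0 1 x one_ne_zero

lemma continuous_phi : Continuous phi := by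
  unfold phi; fun_prop

lemma integrable_phi : Integrable phi :=
  gaussianPDFReal_zero_one ▸ integrable_gaussianPDFReal 0 1

lemma phi_neg (x : ℝ) : phi (-x) = phi x := by
  simp [phi]

lemma phi_sub_eq_phi_add_mul_exp (a t : ℝ) : phi (a - t) = phi (a + t) * exp (2 * a * t) := by
  unfold phi; rw [mul_assoc, ← exp_add]; ring_nf

lemma hasDerivAt_phi (x : ℝ) : HasDerivAt phi (-x * phi x) x := by
  have h : HasDerivAt (fun x : ℝ => -x ^ 2 / 2) (-x) x :=
    ((hasDerivAt_pow 2 x).neg.div_const 2).congr_deriv (by ring)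
  exact (h.exp.const_mul (√(2 * π))⁻¹).congr_deriv (by unfold phi; ring)

lemma Phi_eq_integral (x : ℝ) : Phi x = ∫ t in Iic x, phi t := by
  rw [Phi, gaussianReal_apply_eq_integral 0 one_ne_zero, ENNReal.toReal_ofReal,
    gaussianPDFReal_zero_one]
  exact setIntegral_nonneg measurableSet_Iic fun t _ => gaussianPDFReal_nonneg 0 1 t

lemma Phi_sub_Phi (a b : ℝ) : Phi b - Phi a = ∫ t in a..b, phi t := by
  rw [Phi_eq_integral, Phi_eq_integral,
    intervalIntegral.integral_Iic_sub_Iic integrable_phi.integrableOn integrable_phi.integrableOn]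

lemma hasDerivAt_Phi (x : ℝ) : HasDerivAt Phi (phi x) x := by
  have h : (fun y => Phi 0 + ∫ t in (0 : ℝ)..y, phi t) = Phi := by
    ext y; rw [← Phi_sub_Phi]; ring
  rw [← h]
  exact (intervalIntegral.integral_hasDerivAt_right integrable_phi.intervalIntegrable
    continuous_phi.aestronglyMeasurable.stronglyMeasurableAtFilter
    continuous_phi.continuousAt).const_add _

lemma Phi_strictMono : StrictMono Phi := fun a b hab => by
  have := intervalIntegral.intervalIntegral_pos_of_pos_on integrable_phi.intervalIntegrable
    (fun x _ => phi_pos x) hab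
  linarith [Phi_sub_Phi a b]

lemma Phi_le_one (x : ℝ) : Phi x ≤ 1 :=
  ENNReal.toReal_le_of_le_ofReal zero_le_one (by simpa using prob_le_one)

lemma Phi_neg (x : ℝ) : Phi (-x) = 1 - Phi x := by
  have h_total : Phi x + ∫ t in Ioi x, phi t = 1 := by
    rw [Phi_eq_integral, intervalIntegral.integral_Iic_add_Ioi integrable_phi.integrableOn
      integrable_phi.integrableOn, ← gaussianPDFReal_zero_one]
    exact integral_gaussianPDFReal_eq_one 0 one_ne_zero
  have h_reflect : Phi (-x) = ∫ t in Ioi x, phi t := by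
    simpa [phi_neg, Phi_eq_integral] using integral_comp_neg_Iic (-x) phi
  linarith

lemma phi_div_sub_phi_div_le {a b : ℝ} (ha : 0 < a) (hab : a ≤ b) :
    phi a / a - phi b / b ≤ (1 + (a ^ 2)⁻¹) * (Phi b - Phi a) := by
  have hpos : ∀ x ∈ uIcc a b, 0 < x := fun x hx => by
    rw [uIcc_of_le hab] at hx; exact ha.trans_le hx.1
  have hderiv : ∀ x ∈ uIcc a b, HasDerivAt (fun x => -phi x / x) (phi x * (1 + (x ^ 2)⁻¹)) x :=
    fun x hx => by
      have hx0 := (hpos x hx).ne'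
      exact ((hasDerivAt_phi x).neg.div (hasDerivAt_id x) hx0).congr_deriv
        (by simp only [id, Pi.neg_apply]; field_simp; ring)
  have hcont : ContinuousOn (fun x => phi x * (1 + (x ^ 2)⁻¹)) (uIcc a b) :=
    continuous_phi.continuousOn.mul <| continuousOn_const.add <|
      (continuousOn_pow 2).inv₀ fun x hx => (pow_pos (hpos x hx) 2).ne'
  rw [Phi_sub_Phi, ← intervalIntegral.integral_const_mul]
  calc phi a / a - phi b / b = ∫ x in a..b, phi x * (1 + (x ^ 2)⁻¹) := by
        rw [intervalIntegral.integral_eq_sub_of_hasDerivAt hderiv hcont.intervalIntegrable]; ring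
    _ ≤ ∫ x in a..b, (1 + (a ^ 2)⁻¹) * phi x := by
        refine intervalIntegral.integral_mono_on hab hcont.intervalIntegrable
          (integrable_phi.intervalIntegrable.const_mul _) fun x hx => ?_
        rw [mul_comm]
        gcongr
        · exact (phi_pos x).le
        · exact hx.1

lemma Phi_sqrt_three_lt : Phi √3 < 39 / 40 := by
  have h_mills := phi_div_sub_phi_div_le (b := 10) (by positivity : 0 < √3)
    ((sqrt_lt' (by norm_num)).2 (by norm_num)).le
  have h_sqrt3 : √3 < 7 / 4 := (sqrt_lt' (by norm_num)).2 (by norm_num)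
  have h_c : 0.398 < (√(2 * π))⁻¹ ∧ (√(2 * π))⁻¹ < 0.4 := by
    have h_lo : 2.5 < √(2 * π) := (lt_sqrt (by norm_num)).2 (by linarith [pi_gt_d2])
    have h_hi : √(2 * π) < 2.5125 := (sqrt_lt' (by norm_num)).2 (by linarith [pi_lt_d2])
    constructor
    · rw [lt_inv_comm₀ (by norm_num) (by linarith)]; linarith
    · rw [inv_lt_comm₀ (by linarith) (by norm_num)]; linarith
  have h_exp_three_halves : 1 / 6 < exp (-(3 / 2)) := by
    have h_half := exp_bound_div_one_sub_of_interval' (x := 1 / 2) (by norm_num) (by norm_num)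
    have : exp (3 / 2) < 6 := by
      rw [show (3 / 2 : ℝ) = 1 + 1 / 2 by norm_num, exp_add]
      nlinarith [exp_one_lt_d9, exp_pos 1, exp_pos (1 / 2)]
    rw [exp_neg, one_div]
    exact inv_strictAnti₀ (exp_pos _) this
  have h_exp_fifty : exp (-50) ≤ 1 / 51 := by
    rw [exp_neg, one_div]
    exact inv_anti₀ (by norm_num) (by linarith [add_one_le_exp 50])
  have h_phi_sqrt3 : phi √3 = (√(2 * π))⁻¹ * exp (-(3 / 2)) := by
    simp only [phi, sq_sqrt (by norm_num : (0 : ℝ) ≤ 3)]; ring_nf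
  have h_phi_ten : phi 10 = (√(2 * π))⁻¹ * exp (-50) := by
    simp only [phi]; norm_num
  rw [h_phi_sqrt3, h_phi_ten, sq_sqrt (by norm_num : (0 : ℝ) ≤ 3)] at h_mills
  have h_lhs : 0.0379 < (√(2 * π))⁻¹ * exp (-(3 / 2)) / √3 := by
    rw [lt_div_iff₀ (by positivity)]; nlinarith
  have h_rhs : (√(2 * π))⁻¹ * exp (-50) / 10 ≤ 0.0008 := by nlinarith [exp_pos (-50)]
  linarith [Phi_le_one 10]

lemma two_mul_div_one_sub_lt_log_sub_log {x z : ℝ} (hz : 3 ≤ z ^ 2) (hx₀ : 0 < x) (hx₁ : x < 1) :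
    2 * x / (1 - x ^ 2 / z ^ 2) < log (1 + x) - log (1 - x) := by
  have hq₀ : 0 ≤ x ^ 2 / z ^ 2 := by positivity
  have hq₁ : x ^ 2 / z ^ 2 < 1 := by rw [div_lt_one (by linarith)]; nlinarith
  have h_geom : HasSum (fun k : ℕ => 2 * x * (x ^ 2 / z ^ 2) ^ k)
      (2 * x / (1 - x ^ 2 / z ^ 2)) := by
    simpa [div_eq_mul_inv] using (hasSum_geometric_of_lt_one hq₀ hq₁).mul_left (2 * x)
  have h_log := hasSum_log_sub_log_of_abs_lt_one (abs_lt.2 ⟨by linarith, hx₁⟩)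
  have h_term (k : ℕ) : 2 * x * (x ^ 2 / z ^ 2) ^ k = 2 * x ^ (2 * k + 1) / (z ^ 2) ^ k := by
    rw [div_pow, ← pow_mul, pow_succ]; ring
  have h_odd (k : ℕ) : (2 * k + 1 : ℝ) ≤ (z ^ 2) ^ k :=
    calc (2 * k + 1 : ℝ) ≤ (1 + 2) ^ k := by
          linarith [one_add_mul_le_pow (a := (2 : ℝ)) (by norm_num) k]
      _ ≤ (z ^ 2) ^ k := pow_le_pow_left₀ (by norm_num) (by linarith) k
  have h_coeff (k : ℕ) :
      2 * (1 / (2 * k + 1)) * x ^ (2 * k + 1) = 2 * x ^ (2 * k + 1) / (2 * k + 1) := by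
    ring
  refine hasSum_lt (i := 2) (fun k => ?_) ?_ h_geom h_log
  · rw [h_term, h_coeff]
    exact div_le_div_of_nonneg_left (by positivity) (by positivity) (h_odd k)
  · rw [h_term, h_coeff]
    exact div_lt_div_of_pos_left (by positivity) (by positivity) (by norm_num; nlinarith)

lemma sub_mul_exp_lt_add {z t : ℝ} (hz : √3 ≤ z) (ht : 0 < t) :
    (√(1 + t ^ 2) - z * t) * exp (2 * z * √(1 + t ^ 2) * t) < √(1 + t ^ 2) + z * t := by
  set r := √(1 + t ^ 2)
  have hr : 0 < r := by positivity
  have hr2 : r ^ 2 = 1 + t ^ 2 := sq_sqrt (by positivity)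
  have hz₀ : 0 < z := (by positivity : 0 < √3).trans_le hz
  have hz3 : 3 ≤ z ^ 2 := by
    simpa using pow_le_pow_left₀ (sqrt_nonneg 3) hz 2
  rcases le_or_gt r (z * t) with h | h
  · nlinarith [exp_pos (2 * z * r * t), mul_pos hz₀ ht]
  · set x := z * t / r
    have hx₀ : 0 < x := by positivity
    have hx₁ : x < 1 := (div_lt_one hr).2 h
    have h_arg : 2 * x / (1 - x ^ 2 / z ^ 2) = 2 * z * r * t := by
      have : 1 - x ^ 2 / z ^ 2 = 1 / r ^ 2 := by
        simp only [x]; field_simp; rw [hr2]; ring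
      rw [this]; simp only [x]; field_simp
    have h_log := two_mul_div_one_sub_lt_log_sub_log hz3 hx₀ hx₁
    rw [h_arg, ← log_div (by linarith) (by linarith), lt_log_iff_exp_lt (by positivity),
      lt_div_iff₀ (by linarith)] at h_log
    have h_sub : r - z * t = r * (1 - x) := by simp only [x]; field_simp
    have h_add : r + z * t = r * (1 + x) := by simp only [x]; field_simp
    rw [h_sub, h_add, mul_assoc]
    exact mul_lt_mul_of_pos_left (by linarith) hr

noncomputable def coverage (z t : ℝ) : ℝ :=
  Phi (z * √(1 + t ^ 2) - t) - Phi (-(z * √(1 + t ^ 2)) - t)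

lemma coverage_zero (z : ℝ) : coverage z 0 = 2 * Phi z - 1 := by
  simp only [coverage, zero_pow two_ne_zero, add_zero, sqrt_one, mul_one, sub_zero, Phi_neg]
  ring

lemma coverage_neg (z t : ℝ) : coverage z (-t) = coverage z t := by
  simp only [coverage, neg_sq, sub_neg_eq_add]
  rw [← neg_neg (z * _ + t), ← neg_neg (-(z * _) + t), Phi_neg (-_), Phi_neg (-_)]
  ring_nf

lemma hasDerivAt_coverage (z t : ℝ) :
    HasDerivAt (coverage z)
      (phi (z * √(1 + t ^ 2) - t) * (z * t / √(1 + t ^ 2) - 1)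
        + phi (z * √(1 + t ^ 2) + t) * (z * t / √(1 + t ^ 2) + 1)) t := by
  have h_sqrt : HasDerivAt (fun t => √(1 + t ^ 2)) (t / √(1 + t ^ 2)) t := by
    have h_in : HasDerivAt (fun t : ℝ => 1 + t ^ 2) (2 * t) t := by
      simpa using (hasDerivAt_pow 2 t).const_add 1
    exact (h_in.sqrt (by positivity)).congr_deriv (by field_simp)
  have hu := (h_sqrt.const_mul z).sub (hasDerivAt_id t)
  have hv := (h_sqrt.const_mul z).neg.sub (hasDerivAt_id t)
  refine (((hasDerivAt_Phi _).comp t hu).sub ((hasDerivAt_Phi _).comp t hv)).congr_deriv ?_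
  simp only [Pi.sub_apply, Pi.neg_apply, id]
  rw [show -(z * √(1 + t ^ 2)) - t = -(z * √(1 + t ^ 2) + t) by ring, phi_neg]
  ring

lemma strictMonoOn_coverage {z : ℝ} (hz : √3 ≤ z) : StrictMonoOn (coverage z) (Ici 0) := by
  refine strictMonoOn_of_deriv_pos (convex_Ici 0)
    (fun t _ => (hasDerivAt_coverage z t).continuousAt.continuousWithinAt) fun t ht => ?_
  rw [interior_Ici] at ht
  rw [(hasDerivAt_coverage z t).deriv, phi_sub_eq_phi_add_mul_exp]
  set r := √(1 + t ^ 2)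
  have hr : 0 < r := by positivity
  have h_factor : phi (z * r + t) * exp (2 * (z * r) * t) * (z * t / r - 1)
        + phi (z * r + t) * (z * t / r + 1)
      = phi (z * r + t) / r * (r + z * t - (r - z * t) * exp (2 * z * r * t)) := by
    field_simp; ring
  rw [h_factor]
  exact mul_pos (div_pos (phi_pos _) hr) (by linarith [sub_mul_exp_lt_add hz ht])

theorem stmt13 (b₂ s₁ s₂ z z₀ : ℝ)
    (hs₂ : 0 < s₂) (hs₁ : s₂ < s₁) (hmse : b₂ ^ 2 + s₂ ^ 2 = s₁ ^ 2)
    (hz₀ : 2 * Phi z₀ - 1 = 0.95) (hz : z₀ ≤ z) (hb : b₂ ≠ 0) :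
    Phi ((z * s₁ - b₂) / s₂) - Phi ((-(z * s₁) - b₂) / s₂) > 2 * Phi z - 1 := by
  have h_z : √3 ≤ z := by
    refine le_trans (Phi_strictMono.lt_iff_lt.1 ?_).le hz
    norm_num at hz₀
    linarith [Phi_sqrt_three_lt]
  set t := b₂ / s₂
  have h_ratio : √(1 + t ^ 2) = s₁ / s₂ := by
    rw [show 1 + t ^ 2 = (s₁ / s₂) ^ 2 by simp only [t]; field_simp; linarith,
      sqrt_sq (div_pos (hs₂.trans hs₁) hs₂).le]
  have h_coverage : Phi ((z * s₁ - b₂) / s₂) - Phi ((-(z * s₁) - b₂) / s₂) = coverage z t := by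
    rw [coverage, h_ratio]
    congr 2 <;> simp only [t] <;> ring
  have h_abs : coverage z |t| = coverage z t := by
    rcases abs_choice t with h | h <;> simp only [h, coverage_neg]
  rw [h_coverage, gt_iff_lt, ← coverage_zero, ← h_abs]
  exact strictMonoOn_coverage h_z self_mem_Ici (abs_nonneg t)
    (abs_pos.2 (div_ne_zero hb hs₂.ne'))
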